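/- arXiv:1909.13082 — 6 statements merged into one kernel-verified Lean document; each statement's English description precedes it below -/
import Mathlib

section
/- Under the stated hypotheses, the regularized correlations dominate the true correlations: Corr(P, Q | ψ†, φ‡; λ) ≥ Corr(P, Q). -/
open MeasureTheory
open scoped RealInnerProductSpace

/-!
Fix `y`, and write `x = ∇φ*(y)`, `z = ∇φ‡(y)`. Strong convexity of `ψ†` gives
`ψ†(x) ≥ ψ†(z) + ⟪∇ψ†(z), x - z⟫ + β†/2 ‖x - z‖²`, and since `λβ† ≥ 1`,
`⟪∇ψ†(z) - y, x - z⟫ + β†/2 ‖x - z‖² + λ/2 ‖∇ψ†(z) - y‖²` is at least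
`‖β† (x - z) + (∇ψ†(z) - y)‖² / (2β†) ≥ 0`.
Together these bound `⟪y, x⟫` by the integrand of the regularized correlations with `ψ†(x)` in
place of the `P`-term. Integrating against `Q` and using `(∇φ*)#Q = P` gives the claim.
-/

theorem measurable_gradient {F : Type*} [NormedAddCommGroup F] [InnerProductSpace ℝ F]
    [CompleteSpace F] [MeasurableSpace F] [BorelSpace F] (f : F → ℝ) :
    Measurable (gradient f) :=
  (InnerProductSpace.toDual ℝ F).symm.continuous.measurable.comp (measurable_fderiv ℝ f)

theorem ConvexOn.add_le_of_hasFDerivAt {E : Type*} [NormedAddCommGroup E] [NormedSpace ℝ E]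
    {f : E → ℝ} {f' : E →L[ℝ] ℝ} {b : E} (hf : ConvexOn ℝ Set.univ f) (hf' : HasFDerivAt f f' b)
    (a : E) : f b + f' (a - b) ≤ f a := by
  set line : ℝ →ᵃ[ℝ] E := AffineMap.lineMap b a
  have hconv : ConvexOn ℝ Set.univ (f ∘ line) := by
    simpa using hf.comp_affineMap line
  have hf'0 : HasFDerivAt f f' (line 0) := by simpa [line] using hf'
  have hderiv : HasDerivAt (f ∘ line) (f' (a - b)) 0 :=
    hf'0.comp_hasDerivAt 0 AffineMap.hasDerivAt_lineMap
  have hslope := hconv.le_slope_of_hasDerivAt (Set.mem_univ 0) (Set.mem_univ 1) zero_lt_one hderiv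
  simp only [slope_def_field, Function.comp_apply, line, AffineMap.lineMap_apply_one,
    AffineMap.lineMap_apply_zero, sub_zero, div_one] at hslope
  linarith

theorem StrongConvexOn.add_inner_add_sq_le_of_hasGradientAt {F : Type*} [NormedAddCommGroup F]
    [InnerProductSpace ℝ F] [CompleteSpace F] {f : F → ℝ} {m : ℝ} {g b : F}
    (hf : StrongConvexOn Set.univ m f) (hg : HasGradientAt f g b) (a : F) :
    f b + ⟪g, a - b⟫ + m / 2 * ‖a - b‖ ^ 2 ≤ f a := by
  have hsq := ((hasStrictFDerivAt_norm_sq b).hasFDerivAt.const_mul (m / 2))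
  have h := (strongConvexOn_iff_convex.mp hf).add_le_of_hasFDerivAt (hg.hasFDerivAt.sub hsq) a
  have hexp : ‖a‖ ^ 2 = ‖b‖ ^ 2 + 2 * ⟪b, a - b⟫ + ‖a - b‖ ^ 2 := by
    rw [← norm_add_sq_real, add_sub_cancel]
  simp only [sub_apply, smul_apply, InnerProductSpace.toDual_apply_apply, coe_innerSL_apply,
    nsmul_eq_mul, Nat.cast_ofNat, smul_eq_mul] at h
  linear_combination h - m / 2 * hexp

theorem StrongConvexOn.inner_le_add_sub_add_sq_norm_gradient_sub {F : Type*} [NormedAddCommGroup F]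
    [InnerProductSpace ℝ F] [CompleteSpace F] {f : F → ℝ} {m lam : ℝ} {g b : F}
    (hf : StrongConvexOn Set.univ m f) (hg : HasGradientAt f g b) (hm : 0 < m) (hlam : 1 / m ≤ lam)
    (a y : F) : ⟪y, a⟫ ≤ f a + (⟪b, y⟫ - f b) + lam / 2 * ‖g - y‖ ^ 2 := by
  have hsc := hf.add_inner_add_sq_le_of_hasGradientAt hg a
  have hsquare : 0 ≤ ‖m • (a - b) + (g - y)‖ ^ 2 := sq_nonneg _
  rw [norm_add_sq_real, norm_smul, real_inner_smul_left, Real.norm_of_nonneg hm.le] at hsquare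
  have hlam' : 1 ≤ lam * m := by rwa [div_le_iff₀ hm] at hlam
  have hinner : ⟪g, a - b⟫ = ⟪a - b, g - y⟫ + ⟪y, a⟫ - ⟪b, y⟫ := by
    simp only [inner_sub_left, inner_sub_right, real_inner_comm]; ring
  have hcompleted : 0 ≤ ⟪a - b, g - y⟫ + m / 2 * ‖a - b‖ ^ 2 + lam / 2 * ‖g - y‖ ^ 2 := by
    refine (mul_nonneg_iff_of_pos_left (by positivity : (0 : ℝ) < 2 * m)).mp ?_
    nlinarith [mul_le_mul_of_nonneg_right hlam' (sq_nonneg ‖g - y‖)]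
  linarith

theorem regularized_corr_ge_corr_general {D : ℕ}
    (P Q : Measure (EuclideanSpace ℝ (Fin D)))
    -- Brenier potentials
    (φs : EuclideanSpace ℝ (Fin D) → ℝ)
    (hQP : Q.map (gradient φs) = P)
    -- discriminators
    (ψd : EuclideanSpace ℝ (Fin D) → ℝ) (hψd : Differentiable ℝ ψd)
    (βd : ℝ) (hβd : 0 < βd)
    (hstrong : ConvexOn ℝ Set.univ (fun x => ψd x - βd / 2 * ‖x‖ ^ 2))
    (φc : EuclideanSpace ℝ (Fin D) → ℝ)
    (lam : ℝ) (hlam : 1 / βd < lam)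
    -- integrability of all the integrals involved
    (hI1 : Integrable ψd P)
    (hI2 : Integrable (fun y => ⟪gradient φc y, y⟫ - ψd (gradient φc y)) Q)
    (hI3 : Integrable (fun y => ‖gradient ψd (gradient φc y) - y‖ ^ 2) Q)
    (hI4 : Integrable (fun y => ⟪y, gradient φs y⟫) Q) :
    (∫ y, ⟪y, gradient φs y⟫ ∂Q) ≤
      (∫ x, ψd x ∂P) + (∫ y, (⟪gradient φc y, y⟫ - ψd (gradient φc y)) ∂Q)
        + lam / 2 * ∫ y, ‖gradient ψd (gradient φc y) - y‖ ^ 2 ∂Q := by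
  have hmeas : AEMeasurable (gradient φs) Q := (measurable_gradient φs).aemeasurable
  have hψd_map : Integrable ψd (Q.map (gradient φs)) := hQP ▸ hI1
  have hψdQ : Integrable (fun y => ψd (gradient φs y)) Q :=
    (integrable_map_measure hψd_map.aestronglyMeasurable hmeas).mp hψd_map
  have hψdP : ∫ x, ψd x ∂P = ∫ y, ψd (gradient φs y) ∂Q := by
    rw [← hQP, integral_map hmeas hψd_map.aestronglyMeasurable]
  have hψd_strong : StrongConvexOn Set.univ βd ψd := strongConvexOn_iff_convex.mpr hstrong
  calc (∫ y, ⟪y, gradient φs y⟫ ∂Q)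
      ≤ ∫ y, (ψd (gradient φs y) + (⟪gradient φc y, y⟫ - ψd (gradient φc y))
          + lam / 2 * ‖gradient ψd (gradient φc y) - y‖ ^ 2) ∂Q :=
        integral_mono hI4 ((hψdQ.add hI2).add (hI3.const_mul (lam / 2))) fun y ↦
          hψd_strong.inner_le_add_sub_add_sq_norm_gradient_sub (hψd (gradient φc y)).hasGradientAt
            hβd hlam.le _ _
    _ = _ := by
        rw [hψdP, ← integral_add hψdQ hI2, ← integral_const_mul]
        exact integral_add (hψdQ.add hI2) (hI3.const_mul (lam / 2))

/-- Correlation upper bound: the regularized correlations dominate the true correlations,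
`Corr(P, Q | ψ†, φ‡; λ) ≥ Corr(P, Q)`. -/
theorem regularized_corr_ge_corr {D : ℕ}
    (P Q : Measure (EuclideanSpace ℝ (Fin D)))
    [IsProbabilityMeasure P] [IsProbabilityMeasure Q]
    (hP2 : Integrable (fun x => ‖x‖ ^ 2) P)
    (hQ2 : Integrable (fun y => ‖y‖ ^ 2) Q)
    -- Brenier potentials
    (ψs φs : EuclideanSpace ℝ (Fin D) → ℝ)
    (hψs : Differentiable ℝ ψs) (hψsc : ConvexOn ℝ Set.univ ψs)
    (hφs : Differentiable ℝ φs) (hφsc : ConvexOn ℝ Set.univ φs)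
    (hinv : ∀ y, gradient ψs (gradient φs y) = y)
    (hQP : Q.map (gradient φs) = P)
    (hPQ : P.map (gradient ψs) = Q)
    -- discriminators
    (ψd : EuclideanSpace ℝ (Fin D) → ℝ) (hψd : Differentiable ℝ ψd)
    (βd : ℝ) (hβd : 0 < βd)
    (hstrong : ConvexOn ℝ Set.univ (fun x => ψd x - βd / 2 * ‖x‖ ^ 2))
    (φc : EuclideanSpace ℝ (Fin D) → ℝ) (hφc : Differentiable ℝ φc)
    (hφcc : ConvexOn ℝ Set.univ φc)
    (lam : ℝ) (hlam : 1 / βd < lam)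
    -- integrability of all the integrals involved
    (hI1 : Integrable ψd P)
    (hI2 : Integrable (fun y => ⟪gradient φc y, y⟫ - ψd (gradient φc y)) Q)
    (hI3 : Integrable (fun y => ‖gradient ψd (gradient φc y) - y‖ ^ 2) Q)
    (hI4 : Integrable (fun y => ⟪y, gradient φs y⟫) Q) :
    (∫ y, ⟪y, gradient φs y⟫ ∂Q) ≤
      (∫ x, ψd x ∂P) + (∫ y, (⟪gradient φc y, y⟫ - ψd (gradient φc y)) ∂Q)
        + lam / 2 * ∫ y, ‖gradient ψd (gradient φc y) - y‖ ^ 2 ∂Q :=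
  regularized_corr_ge_corr_general P Q φs hQP ψd hψd βd hβd hstrong φc lam hlam hI1 hI2 hI3 hI4
end

section
/- Under the stated hypotheses, the following quantitative lower bound holds: Corr(P, Q | ψ†, φ‡; λ) ≥ Corr(P, Q) + (1/2)(λ − 1/β†) ∫ ‖∇ψ†(∇φ‡(y)) − y‖² dQ(y) + (1/2) ∫ ‖(1/√β†)(∇ψ†(∇φ‡(y)) − y) + √β† (∇φ*(y) − ∇φ‡(y))‖² dQ(y). -/
open MeasureTheory ENNReal
open scoped RealInnerProductSpace

/-!
Strong convexity of `ψ†` at `z = ∇φ‡(y)`, evaluated at `x = ∇φ*(y)`, gives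
`ψ†(x) ≥ ψ†(z) + ⟪∇ψ†(z), x - z⟫ + β†/2 ‖x - z‖²`. Expanding the square in the statement shows
that this is exactly the pointwise form of the bound (the `λ`-terms cancel). Integrating against
`Q` and using `(∇φ*)#Q = P` to identify `∫ ψ†(∇φ*(y)) dQ` with `∫ ψ† dP` gives the theorem.
-/

variable {E : Type*} [NormedAddCommGroup E]

theorem ConvexOn.tangent_le_of_hasFDerivAt [NormedSpace ℝ E] {s : Set E} {f : E → ℝ}
    {f' : StrongDual ℝ E} {a b : E} (hf : ConvexOn ℝ s f) (ha : a ∈ s) (hb : b ∈ s)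
    (hd : HasFDerivAt f f' b) : f b + f' (a - b) ≤ f a := by
  set g : ℝ →ᵃ[ℝ] E := AffineMap.lineMap b a
  have hg0 : g 0 = b := AffineMap.lineMap_apply_zero b a
  have hg1 : g 1 = a := AffineMap.lineMap_apply_one b a
  have hfg : HasDerivAt (f ∘ g) (f' (a - b)) 0 :=
    (hg0 ▸ hd).comp_hasDerivAt 0 AffineMap.hasDerivAt_lineMap
  have hslope := (hf.comp_affineMap g).le_slope_of_hasDerivAt
    (by simpa [hg0]) (by simpa [hg1]) zero_lt_one hfg
  rw [slope_def_field, Function.comp_apply, Function.comp_apply, hg0, hg1] at hslope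
  linarith

variable [InnerProductSpace ℝ E]

theorem norm_one_div_sqrt_smul_add_sqrt_smul_sq {β : ℝ} (hβ : 0 < β) (u v : E) :
    ‖(1 / Real.sqrt β) • u + Real.sqrt β • v‖ ^ 2
      = 1 / β * ‖u‖ ^ 2 + 2 * ⟪u, v⟫ + β * ‖v‖ ^ 2 := by
  rw [norm_add_sq_real, norm_smul, norm_smul, real_inner_smul_left, real_inner_smul_right,
    Real.norm_eq_abs, Real.norm_eq_abs, mul_pow, mul_pow, sq_abs, sq_abs, div_pow, one_pow,
    Real.sq_sqrt hβ.le]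
  field_simp

variable [CompleteSpace E]

theorem StrongConvexOn.tangent_add_sq_le_of_hasGradientAt {s : Set E} {f : E → ℝ} {m : ℝ}
    {f' a b : E} (hf : StrongConvexOn s m f) (ha : a ∈ s) (hb : b ∈ s)
    (hd : HasGradientAt f f' b) : f b + ⟪f', a - b⟫ + m / 2 * ‖a - b‖ ^ 2 ≤ f a := by
  have hshift := hd.hasFDerivAt.sub ((hasFDerivAt_id b).norm_sq.const_mul (m / 2))
  have htangent := (strongConvexOn_iff_convex.mp hf).tangent_le_of_hasFDerivAt ha hb hshift
  simp only [id_eq, ContinuousLinearMap.comp_id, sub_apply, InnerProductSpace.toDual_apply_apply,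
    smul_apply, coe_innerSL_apply, nsmul_eq_mul, Nat.cast_ofNat, smul_eq_mul] at htangent
  have hsq : ‖a - b‖ ^ 2 = ‖a‖ ^ 2 - ‖b‖ ^ 2 - 2 * ⟪b, a - b⟫ := by
    rw [norm_sub_sq_real, inner_sub_right, real_inner_self_eq_norm_sq, real_inner_comm]
    ring
  rw [hsq]
  linarith

theorem StrongConvexOn.inner_add_half_sq_le_of_hasGradientAt {s : Set E} {f : E → ℝ} {β : ℝ}
    {f' x y z : E} (hf : StrongConvexOn s β f) (hβ : 0 < β) (hx : x ∈ s) (hz : z ∈ s)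
    (hd : HasGradientAt f f' z) :
    ⟪y, x⟫ + 1 / 2 * ‖(1 / Real.sqrt β) • (f' - y) + Real.sqrt β • (x - z)‖ ^ 2
      ≤ f x + (⟪z, y⟫ - f z) + 1 / (2 * β) * ‖f' - y‖ ^ 2 := by
  have htangent := hf.tangent_add_sq_le_of_hasGradientAt hx hz hd
  rw [norm_one_div_sqrt_smul_add_sqrt_smul_sq hβ, inner_sub_left, inner_sub_right,
    inner_sub_right, real_inner_comm z y]
  rw [inner_sub_right] at htangent
  linear_combination htangent

theorem measurable_gradient_s3 [MeasurableSpace E] [BorelSpace E] (f : E → ℝ) :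
    Measurable (gradient f) :=
  (InnerProductSpace.toDual ℝ E).symm.continuous.measurable.comp (measurable_fderiv ℝ f)

theorem regularized_corr_quantitative_lower_bound_general {D : ℕ}
    (P Q : Measure (EuclideanSpace ℝ (Fin D)))
    -- Brenier potentials
    (φs : EuclideanSpace ℝ (Fin D) → ℝ)
    (hQP : Q.map (gradient φs) = P)
    -- discriminators
    (ψd : EuclideanSpace ℝ (Fin D) → ℝ) (hψd : Differentiable ℝ ψd)
    (βd : ℝ) (hβd : 0 < βd)
    (hstrong : ConvexOn ℝ Set.univ (fun x => ψd x - βd / 2 * ‖x‖ ^ 2))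
    (φc : EuclideanSpace ℝ (Fin D) → ℝ)
    (lam : ℝ)
    -- integrability of all the integrals involved
    (hI1 : Integrable ψd P)
    (hI2 : Integrable (fun y => ⟪gradient φc y, y⟫ - ψd (gradient φc y)) Q)
    (hI3 : Integrable (fun y => ‖gradient ψd (gradient φc y) - y‖ ^ 2) Q)
    (hI4 : Integrable (fun y => ⟪y, gradient φs y⟫) Q)
    (hI5 : Integrable (fun y =>
      ‖(1 / Real.sqrt βd) • (gradient ψd (gradient φc y) - y)
        + Real.sqrt βd • (gradient φs y - gradient φc y)‖ ^ 2) Q) :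
    (∫ y, ⟪y, gradient φs y⟫ ∂Q)
      + 1 / 2 * (lam - 1 / βd) * (∫ y, ‖gradient ψd (gradient φc y) - y‖ ^ 2 ∂Q)
      + 1 / 2 * (∫ y, ‖(1 / Real.sqrt βd) • (gradient ψd (gradient φc y) - y)
          + Real.sqrt βd • (gradient φs y - gradient φc y)‖ ^ 2 ∂Q) ≤
    (∫ x, ψd x ∂P) + (∫ y, (⟪gradient φc y, y⟫ - ψd (gradient φc y)) ∂Q)
        + lam / 2 * ∫ y, ‖gradient ψd (gradient φc y) - y‖ ^ 2 ∂Q := by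
  subst hQP
  have hmeas := (measurable_gradient_s3 φs).aemeasurable (μ := Q)
  have hψd_meas := hψd.continuous.aestronglyMeasurable (μ := Q.map (gradient φs))
  have hIψ : Integrable (fun y => ψd (gradient φs y)) Q :=
    (integrable_map_measure hψd_meas hmeas).mp hI1
  have hmono := integral_mono (hI4.fun_add (hI5.const_mul (1 / 2)))
    ((hIψ.fun_add hI2).fun_add (hI3.const_mul (1 / (2 * βd))))
    fun y => (strongConvexOn_iff_convex.mpr hstrong).inner_add_half_sq_le_of_hasGradientAt hβd
      (Set.mem_univ _) (Set.mem_univ _) (hψd _).hasGradientAt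
  rw [integral_add hI4 (hI5.const_mul _), integral_add (hIψ.fun_add hI2) (hI3.const_mul _),
    integral_add hIψ hI2, integral_const_mul, integral_const_mul] at hmono
  rw [integral_map hmeas hψd_meas]
  linear_combination hmono

/-- Quantitative lower bound for the regularized correlations. -/
theorem regularized_corr_quantitative_lower_bound {D : ℕ}
    (P Q : Measure (EuclideanSpace ℝ (Fin D)))
    [IsProbabilityMeasure P] [IsProbabilityMeasure Q]
    (hP2 : Integrable (fun x => ‖x‖ ^ 2) P)
    (hQ2 : Integrable (fun y => ‖y‖ ^ 2) Q)
    -- Brenier potentials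
    (ψs φs : EuclideanSpace ℝ (Fin D) → ℝ)
    (hψs : Differentiable ℝ ψs) (hψsc : ConvexOn ℝ Set.univ ψs)
    (hφs : Differentiable ℝ φs) (hφsc : ConvexOn ℝ Set.univ φs)
    (hinv : ∀ y, gradient ψs (gradient φs y) = y)
    (hQP : Q.map (gradient φs) = P)
    (hPQ : P.map (gradient ψs) = Q)
    -- discriminators
    (ψd : EuclideanSpace ℝ (Fin D) → ℝ) (hψd : Differentiable ℝ ψd)
    (βd : ℝ) (hβd : 0 < βd)
    (hstrong : ConvexOn ℝ Set.univ (fun x => ψd x - βd / 2 * ‖x‖ ^ 2))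
    (φc : EuclideanSpace ℝ (Fin D) → ℝ) (hφc : Differentiable ℝ φc)
    (hφcc : ConvexOn ℝ Set.univ φc)
    (lam : ℝ) (hlam : 1 / βd < lam)
    -- integrability of all the integrals involved
    (hI1 : Integrable ψd P)
    (hI2 : Integrable (fun y => ⟪gradient φc y, y⟫ - ψd (gradient φc y)) Q)
    (hI3 : Integrable (fun y => ‖gradient ψd (gradient φc y) - y‖ ^ 2) Q)
    (hI4 : Integrable (fun y => ⟪y, gradient φs y⟫) Q)
    (hI5 : Integrable (fun y =>
      ‖(1 / Real.sqrt βd) • (gradient ψd (gradient φc y) - y)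
        + Real.sqrt βd • (gradient φs y - gradient φc y)‖ ^ 2) Q) :
    (∫ y, ⟪y, gradient φs y⟫ ∂Q)
      + 1 / 2 * (lam - 1 / βd) * (∫ y, ‖gradient ψd (gradient φc y) - y‖ ^ 2 ∂Q)
      + 1 / 2 * (∫ y, ‖(1 / Real.sqrt βd) • (gradient ψd (gradient φc y) - y)
          + Real.sqrt βd • (gradient φs y - gradient φc y)‖ ^ 2 ∂Q) ≤
    (∫ x, ψd x ∂P) + (∫ y, (⟪gradient φc y, y⟫ - ψd (gradient φc y)) ∂Q)
        + lam / 2 * ∫ y, ‖gradient ψd (gradient φc y) - y‖ ^ 2 ∂Q :=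
  regularized_corr_quantitative_lower_bound_general P Q φs hQP ψd hψd βd hβd hstrong φc lam hI1 hI2
    hI3 hI4 hI5
end

section
/- Under the stated hypotheses, the single-discriminator correlations satisfy the lower bound ∫ ψ†(x) dP(x) + ∫ φ†(y) dQ(y) ≥ Corr(P, Q) + (β†/2) ∫ ‖∇φ*(y) − ∇φ†(y)‖² dQ(y). -/
open MeasureTheory ENNReal
open scoped RealInnerProductSpace

lemma conv_tangent {E : Type*} [NormedAddCommGroup E] [NormedSpace ℝ E]
    {g : E → ℝ} (hg : Differentiable ℝ g) (hc : ConvexOn ℝ Set.univ g) (x₀ x : E) :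
    g x₀ + fderiv ℝ g x₀ (x - x₀) ≤ g x := by
  set v := x - x₀ with hv
  set h : ℝ → ℝ := fun t => g (x₀ + t • v) with hh
  have hconv : ConvexOn ℝ Set.univ h := by
    have := hc.comp_affineMap (AffineMap.lineMap x₀ x : ℝ →ᵃ[ℝ] E)
    have heq : (g ∘ (AffineMap.lineMap x₀ x : ℝ →ᵃ[ℝ] E)) = h := by
      funext t
      simp [h, AffineMap.lineMap_apply, hv, add_comm]
    rw [heq] at this
    simpa using this
  have hd : ∀ t : ℝ, HasDerivAt h (fderiv ℝ g (x₀ + t • v) v) t := by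
    intro t
    have hline : HasDerivAt (fun s : ℝ => x₀ + s • v) v t := by
      simpa using ((hasDerivAt_id t).smul_const v).const_add x₀
    exact (hg (x₀ + t • v)).hasFDerivAt.comp_hasDerivAt t hline
  have key := hconv.le_slope_of_hasDerivAt (Set.mem_univ (0:ℝ)) (Set.mem_univ (1:ℝ))
    one_pos (hd 0)
  have h0 : h 0 = g x₀ := by simp [h]
  have h1 : h 1 = g x := by simp [h, hv]
  rw [slope_def_field] at key
  simp only [h0, h1, zero_smul, add_zero] at key
  have : fderiv ℝ g x₀ v ≤ g x - g x₀ := by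
    simpa using key
  linarith

lemma strong_tangent {E : Type*} [NormedAddCommGroup E] [InnerProductSpace ℝ E] [CompleteSpace E]
    {f : E → ℝ} (hf : Differentiable ℝ f) {β : ℝ}
    (hs : ConvexOn ℝ Set.univ (fun x => f x - β / 2 * ‖x‖ ^ 2)) (x₀ x : E) :
    f x₀ + ⟪gradient f x₀, x - x₀⟫ + β / 2 * ‖x - x₀‖ ^ 2 ≤ f x := by
  set g : E → ℝ := fun z => f z - β / 2 * ‖z‖ ^ 2 with hg
  have hD : HasFDerivAt (fun z : E => ‖z‖ ^ 2)
      ((fderivInnerCLM ℝ ((x₀ : E), (x₀ : E))).comp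
        ((ContinuousLinearMap.id ℝ E).prod (ContinuousLinearMap.id ℝ E))) x₀ := by
    have := (hasFDerivAt_id x₀).inner ℝ (hasFDerivAt_id x₀)
    simpa only [real_inner_self_eq_norm_sq, id] using this
  have hgd : HasFDerivAt g
      (fderiv ℝ f x₀ - (β / 2) • ((fderivInnerCLM ℝ ((x₀ : E), (x₀ : E))).comp
        ((ContinuousLinearMap.id ℝ E).prod (ContinuousLinearMap.id ℝ E)))) x₀ :=
    (hf x₀).hasFDerivAt.sub (hD.const_mul (β / 2))
  have hgdiff : Differentiable ℝ g := fun z => by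
    have hDz : HasFDerivAt (fun z : E => ‖z‖ ^ 2)
        ((fderivInnerCLM ℝ ((z : E), (z : E))).comp
          ((ContinuousLinearMap.id ℝ E).prod (ContinuousLinearMap.id ℝ E))) z := by
      have := (hasFDerivAt_id z).inner ℝ (hasFDerivAt_id z)
      simpa only [real_inner_self_eq_norm_sq, id] using this
    exact ((hf z).hasFDerivAt.sub (hDz.const_mul (β / 2))).differentiableAt
  have key := conv_tangent hgdiff hs x₀ x
  rw [hgd.fderiv] at key
  have hfd : fderiv ℝ f x₀ (x - x₀) = ⟪gradient f x₀, x - x₀⟫ := by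
    have hgr : gradient f x₀ = (InnerProductSpace.toDual ℝ E).symm (fderiv ℝ f x₀) := rfl
    rw [hgr]
    exact (InnerProductSpace.toDual_symm_apply).symm
  simp only [ContinuousLinearMap.sub_apply, ContinuousLinearMap.smul_apply,
    ContinuousLinearMap.comp_apply, ContinuousLinearMap.prod_apply,
    ContinuousLinearMap.id_apply, fderivInnerCLM_apply, smul_eq_mul, hfd, hg] at key
  have hns : ‖x - x₀‖ ^ 2 = ‖x‖ ^ 2 - 2 * ⟪x, x₀⟫ + ‖x₀‖ ^ 2 := norm_sub_sq_real x x₀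
  have hic : ⟪x₀, x - x₀⟫ = ⟪x₀, x⟫ - ‖x₀‖ ^ 2 := by
    rw [inner_sub_right, real_inner_self_eq_norm_sq]
  have hcomm : ⟪x, x₀⟫ = ⟪x₀, x⟫ := real_inner_comm x₀ x
  have hic2 : ⟪x - x₀, x₀⟫ = ⟪x₀, x⟫ - ‖x₀‖ ^ 2 := by
    rw [inner_sub_left, real_inner_self_eq_norm_sq, real_inner_comm]
  rw [hic, hic2] at key
  rw [hns, hcomm]
  linarith [key]

/-- Single-discriminator correlations lower bound:
`∫ ψ† dP + ∫ φ† dQ ≥ Corr(P,Q) + (β†/2) ∫ ‖∇φ* - ∇φ†‖² dQ`. -/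
theorem single_discriminator_corr_lower_bound {D : ℕ}
    (P Q : Measure (EuclideanSpace ℝ (Fin D)))
    [IsProbabilityMeasure P] [IsProbabilityMeasure Q]
    (hP2 : Integrable (fun x => ‖x‖ ^ 2) P)
    (hQ2 : Integrable (fun y => ‖y‖ ^ 2) Q)
    -- Brenier potentials
    (ψs φs : EuclideanSpace ℝ (Fin D) → ℝ)
    (hψs : Differentiable ℝ ψs) (hψsc : ConvexOn ℝ Set.univ ψs)
    (hφs : Differentiable ℝ φs) (hφsc : ConvexOn ℝ Set.univ φs)
    (hinv : ∀ y, gradient ψs (gradient φs y) = y)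
    (hQP : Q.map (gradient φs) = P)
    (hPQ : P.map (gradient ψs) = Q)
    -- discriminator and its conjugate
    (ψd : EuclideanSpace ℝ (Fin D) → ℝ) (hψd : Differentiable ℝ ψd)
    (βd : ℝ) (hβd : 0 < βd)
    (hstrong : ConvexOn ℝ Set.univ (fun x => ψd x - βd / 2 * ‖x‖ ^ 2))
    (φd : EuclideanSpace ℝ (Fin D) → ℝ) (hφd : Differentiable ℝ φd)
    (hφdc : ConvexOn ℝ Set.univ φd)
    (hconj : ∀ y, φd y = ⟪gradient φd y, y⟫ - ψd (gradient φd y))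
    (hdinv : ∀ y, gradient ψd (gradient φd y) = y)
    -- integrability of all the integrals involved
    (hI1 : Integrable ψd P)
    (hI2 : Integrable φd Q)
    (hI3 : Integrable (fun y => ⟪y, gradient φs y⟫) Q)
    (hI4 : Integrable (fun y => ‖gradient φs y - gradient φd y‖ ^ 2) Q) :
    (∫ y, ⟪y, gradient φs y⟫ ∂Q)
        + βd / 2 * ∫ y, ‖gradient φs y - gradient φd y‖ ^ 2 ∂Q ≤
      (∫ x, ψd x ∂P) + ∫ y, φd y ∂Q := by
  have hmeas : Measurable (gradient φs) :=
    ((InnerProductSpace.toDual ℝ (EuclideanSpace ℝ (Fin D))).symm.continuous.measurable).comp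
      (measurable_fderiv ℝ φs)
  have hmapint : Integrable ψd (Q.map (gradient φs)) := by rw [hQP]; exact hI1
  have hcomp_int : Integrable (fun y => ψd (gradient φs y)) Q :=
    (integrable_map_measure hmapint.aestronglyMeasurable hmeas.aemeasurable).mp hmapint
  have hPint : ∫ x, ψd x ∂P = ∫ y, ψd (gradient φs y) ∂Q := by
    rw [← hQP]
    exact integral_map hmeas.aemeasurable hmapint.aestronglyMeasurable
  have hpt : ∀ y, ⟪y, gradient φs y⟫
      + βd / 2 * ‖gradient φs y - gradient φd y‖ ^ 2
      ≤ ψd (gradient φs y) + φd y := by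
    intro y
    have hst := strong_tangent hψd hstrong (gradient φd y) (gradient φs y)
    rw [hdinv y] at hst
    rw [hconj y]
    have hinner : ⟪y, gradient φs y - gradient φd y⟫
        = ⟪y, gradient φs y⟫ - ⟪y, gradient φd y⟫ := inner_sub_right _ _ _
    have hsym : ⟪gradient φd y, y⟫ = ⟪y, gradient φd y⟫ := real_inner_comm _ _
    rw [hinner] at hst
    linarith
  have hsum : ∫ y, (⟪y, gradient φs y⟫
        + βd / 2 * ‖gradient φs y - gradient φd y‖ ^ 2) ∂Q
      = (∫ y, ⟪y, gradient φs y⟫ ∂Q)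
        + βd / 2 * ∫ y, ‖gradient φs y - gradient φd y‖ ^ 2 ∂Q := by
    rw [integral_add hI3 (hI4.const_mul (βd / 2)), MeasureTheory.integral_const_mul]
  rw [hPint, ← integral_add hcomp_int hI2, ← hsum]
  exact integral_mono (hI3.add (hI4.const_mul (βd / 2))) (hcomp_int.add hI2) hpt
end

section
/- Let ψ : ℝ^D → ℝ be a differentiable convex function whose gradient is Lipschitz with constant B > 0, and let φ : ℝ^D → ℝ be a differentiable convex function. Suppose ∫ ‖∇ψ(x) − ∇ψ*(x)‖² dP(x) ≤ ε_X and ∫ ‖∇φ(y) − ∇φ*(y)‖² dQ(y) ≤ ε_Y for some ε_X, ε_Y ≥ 0, and let λ > 0. Then the regularized correlations satisfy Corr(P, Q | ψ, φ; λ) ≤ Corr(P, Q) + (λ/2)(B√ε_Y + √ε_X)² + (B√ε_Y + √ε_X)·√ε_Y + (B/2)·ε_Y. -/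
/-!
Transporting `P` back to `Q` along `∇φ*`, the first-order convexity inequality for `ψ` between
`∇φ*(y)` and `∇φ(y)` bounds the correlation integrand by
`⟪y, ∇φ*(y)⟫ + ‖∇ψ(∇φ*(y)) - y‖ * ‖∇φ(y) - ∇φ*(y)‖`. Because `∇ψ*(∇φ*(y)) = y`, the first factor
is the error `‖∇ψ - ∇ψ*‖` transported from `P` to `Q`, so Cauchy–Schwarz bounds the error term by
`√ε_X √ε_Y`. For the regularizer, the Lipschitz bound on `∇ψ` gives
`‖∇ψ(∇φ(y)) - y‖ ≤ B ‖∇φ(y) - ∇φ*(y)‖ + ‖∇ψ(∇φ*(y)) - y‖`, whose `L²(Q)` norm is at most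
`B √ε_Y + √ε_X`.
-/

open MeasureTheory
open scoped RealInnerProductSpace

theorem ConvexOn.sub_le_fderiv_sub {E : Type*} [NormedAddCommGroup E] [NormedSpace ℝ E]
    {f : E → ℝ} (hf : ConvexOn ℝ Set.univ f) {a : E} (hfa : DifferentiableAt ℝ f a) (b : E) :
    f a - f b ≤ fderiv ℝ f a (a - b) := by
  have hline : ConvexOn ℝ Set.univ (f ∘ AffineMap.lineMap b a) := hf.comp_affineMap _
  have hderiv : HasDerivAt (f ∘ AffineMap.lineMap b a) (fderiv ℝ f a (a - b)) (1 : ℝ) := by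
    have hfa' : HasFDerivAt f (fderiv ℝ f a) (AffineMap.lineMap b a (1 : ℝ)) := by
      rw [AffineMap.lineMap_apply_one]; exact hfa.hasFDerivAt
    exact hfa'.comp_hasDerivAt (1 : ℝ) AffineMap.hasDerivAt_lineMap
  simpa [slope_def_field] using
    hline.slope_le_of_hasDerivAt (Set.mem_univ 0) (Set.mem_univ 1) one_pos hderiv

theorem ConvexOn.add_inner_sub_le {F : Type*} [NormedAddCommGroup F] [InnerProductSpace ℝ F]
    [CompleteSpace F] {ψ : F → ℝ} (hψ : ConvexOn ℝ Set.univ ψ) {p : F}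
    (hp : DifferentiableAt ℝ ψ p) (q y : F) :
    ψ p + (⟪q, y⟫ - ψ q) ≤ ⟪y, p⟫ + ‖gradient ψ p - y‖ * ‖q - p‖ := by
  have hconv : ψ p - ψ q ≤ ⟪gradient ψ p, p - q⟫ := by
    rw [inner_gradient_left]; exact hψ.sub_le_fderiv_sub hp q
  have hsplit : ⟪gradient ψ p, p - q⟫ = ⟪y, p⟫ - ⟪q, y⟫ + ⟪gradient ψ p - y, p - q⟫ := by
    rw [inner_sub_left, inner_sub_right, inner_sub_right, real_inner_comm q y]; ring
  have hcs : ⟪gradient ψ p - y, p - q⟫ ≤ ‖gradient ψ p - y‖ * ‖q - p‖ := by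
    rw [norm_sub_rev q p]; exact real_inner_le_norm _ _
  linarith

section CauchySchwarz

variable {α : Type*} [MeasurableSpace α] {μ : Measure α} {f g : α → ℝ} {a b : ℝ}

theorem integral_mul_le_sqrt_mul_sqrt (hf0 : 0 ≤ᵐ[μ] f) (hg0 : 0 ≤ᵐ[μ] g)
    (hf : MemLp f 2 μ) (hg : MemLp g 2 μ) (ha : ∫ x, f x ^ 2 ∂μ ≤ a)
    (hb : ∫ x, g x ^ 2 ∂μ ≤ b) :
    ∫ x, f x * g x ∂μ ≤ √a * √b := by
  have holder := integral_mul_le_Lp_mul_Lq_of_nonneg Real.HolderConjugate.two_two hf0 hg0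
    (by simpa using hf) (by simpa using hg)
  simp only [Real.rpow_two, ← Real.sqrt_eq_rpow] at holder
  exact holder.trans (mul_le_mul (Real.sqrt_le_sqrt ha) (Real.sqrt_le_sqrt hb)
    (Real.sqrt_nonneg _) (Real.sqrt_nonneg _))

theorem integral_sq_le_of_le_mul_add {h : α → ℝ} {B : ℝ} (hB : 0 ≤ B)
    (hf0 : 0 ≤ᵐ[μ] f) (hg0 : 0 ≤ᵐ[μ] g) (hf : MemLp f 2 μ) (hg : MemLp g 2 μ)
    (ha : ∫ x, f x ^ 2 ∂μ ≤ a) (hb : ∫ x, g x ^ 2 ∂μ ≤ b)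
    (hh : Integrable (fun x => h x ^ 2) μ) (hh0 : 0 ≤ᵐ[μ] h)
    (hle : ∀ᵐ x ∂μ, h x ≤ B * f x + g x) :
    ∫ x, h x ^ 2 ∂μ ≤ (B * √a + √b) ^ 2 := by
  have hf2 := hf.integrable_sq
  have hg2 := hg.integrable_sq
  have hfg : Integrable (fun x => f x * g x) μ := hf.integrable_mul hg
  have hsq : ∀ᵐ x ∂μ, h x ^ 2 ≤ B ^ 2 * f x ^ 2 + 2 * B * (f x * g x) + g x ^ 2 := by
    filter_upwards [hh0, hle] with x hx0 hx
    calc h x ^ 2 ≤ (B * f x + g x) ^ 2 := pow_le_pow_left₀ hx0 hx 2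
      _ = _ := by ring
  have hBf : Integrable (fun x => B ^ 2 * f x ^ 2) μ := hf2.const_mul _
  have hBfg : Integrable (fun x => 2 * B * (f x * g x)) μ := hfg.const_mul _
  have hsum : Integrable (fun x => B ^ 2 * f x ^ 2 + 2 * B * (f x * g x)) μ := hBf.add hBfg
  have hexpand : ∫ x, (B ^ 2 * f x ^ 2 + 2 * B * (f x * g x) + g x ^ 2) ∂μ
      = B ^ 2 * ∫ x, f x ^ 2 ∂μ + 2 * B * ∫ x, f x * g x ∂μ + ∫ x, g x ^ 2 ∂μ := by
    rw [integral_add hsum hg2, integral_add hBf hBfg, integral_const_mul, integral_const_mul]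
  have ha0 : 0 ≤ a := (integral_nonneg fun x => sq_nonneg (f x)).trans ha
  have hb0 : 0 ≤ b := (integral_nonneg fun x => sq_nonneg (g x)).trans hb
  have hcs := integral_mul_le_sqrt_mul_sqrt hf0 hg0 hf hg ha hb
  calc ∫ x, h x ^ 2 ∂μ
      ≤ ∫ x, (B ^ 2 * f x ^ 2 + 2 * B * (f x * g x) + g x ^ 2) ∂μ :=
        integral_mono_ae hh (hsum.add hg2) hsq
    _ ≤ B ^ 2 * a + 2 * B * (√a * √b) + b := by
        rw [hexpand]; gcongr
    _ = (B * √a + √b) ^ 2 := by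
        rw [add_sq, mul_pow, Real.sq_sqrt ha0, Real.sq_sqrt hb0]; ring

end CauchySchwarz

section Transport

variable {E : Type*} [NormedAddCommGroup E] [MeasurableSpace E] [BorelSpace E]
  [SecondCountableTopology E] {μ : Measure E} {T S G : E → E}
  (hT : Measurable T) (hS : Measurable S) (hG : Measurable G) (hST : Function.LeftInverse S T)
include hT hS hG hST

theorem integral_sq_norm_comp_sub_eq_of_leftInverse :
    ∫ y, ‖G (T y) - y‖ ^ 2 ∂μ = ∫ x, ‖G x - S x‖ ^ 2 ∂μ.map T := by
  have hm : AEStronglyMeasurable (fun x => ‖G x - S x‖ ^ 2) (μ.map T) :=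
    ((hG.sub hS).norm.pow_const 2).aestronglyMeasurable
  rw [integral_map hT.aemeasurable hm]
  simp only [hST _]

theorem memLp_norm_comp_sub_of_leftInverse
    (hI : Integrable (fun x => ‖G x - S x‖ ^ 2) (μ.map T)) :
    MemLp (fun y => ‖G (T y) - y‖) 2 μ := by
  have hm : AEStronglyMeasurable (fun x => ‖G x - S x‖ ^ 2) (μ.map T) :=
    ((hG.sub hS).norm.pow_const 2).aestronglyMeasurable
  have hm' : AEStronglyMeasurable (fun y => ‖G (T y) - y‖) μ :=
    ((hG.comp hT).sub measurable_id).norm.aestronglyMeasurable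
  refine (memLp_two_iff_integrable_sq hm').2 ?_
  simpa only [Function.comp_def, hST _] using (integrable_map_measure hm hT.aemeasurable).1 hI

end Transport

theorem ConvexOn.integral_add_integral_inner_sub_le {E : Type*} [NormedAddCommGroup E]
    [InnerProductSpace ℝ E] [CompleteSpace E] [MeasurableSpace E] {μ : Measure E}
    {ψ : E → ℝ} (hψc : ConvexOn ℝ Set.univ ψ) (hψ : Differentiable ℝ ψ) {p q : E → E} {a b : ℝ}
    (hp : Integrable (fun y => ψ (p y)) μ) (hq : Integrable (fun y => ⟪q y, y⟫ - ψ (q y)) μ)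
    (hpy : Integrable (fun y => ⟪y, p y⟫) μ)
    (hu : MemLp (fun y => ‖gradient ψ (p y) - y‖) 2 μ) (hv : MemLp (fun y => ‖q y - p y‖) 2 μ)
    (ha : ∫ y, ‖gradient ψ (p y) - y‖ ^ 2 ∂μ ≤ a) (hb : ∫ y, ‖q y - p y‖ ^ 2 ∂μ ≤ b) :
    (∫ y, ψ (p y) ∂μ) + ∫ y, (⟪q y, y⟫ - ψ (q y)) ∂μ ≤ (∫ y, ⟪y, p y⟫ ∂μ) + √a * √b := by
  have huv : Integrable (fun y => ‖gradient ψ (p y) - y‖ * ‖q y - p y‖) μ := hu.integrable_mul hv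
  calc (∫ y, ψ (p y) ∂μ) + ∫ y, (⟪q y, y⟫ - ψ (q y)) ∂μ
      = ∫ y, (ψ (p y) + (⟪q y, y⟫ - ψ (q y))) ∂μ := (integral_add hp hq).symm
    _ ≤ ∫ y, (⟪y, p y⟫ + ‖gradient ψ (p y) - y‖ * ‖q y - p y‖) ∂μ :=
      integral_mono (hp.add hq) (hpy.add huv) fun y => hψc.add_inner_sub_le (hψ _) _ _
    _ = (∫ y, ⟪y, p y⟫ ∂μ) + ∫ y, ‖gradient ψ (p y) - y‖ * ‖q y - p y‖ ∂μ :=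
      integral_add hpy huv
    _ ≤ (∫ y, ⟪y, p y⟫ ∂μ) + √a * √b := by
      gcongr
      exact integral_mul_le_sqrt_mul_sqrt (.of_forall fun _ => norm_nonneg _)
        (.of_forall fun _ => norm_nonneg _) hu hv ha hb

theorem regularized_corr_approximability_general {D : ℕ}
    (P Q : Measure (EuclideanSpace ℝ (Fin D)))
    -- Brenier potentials
    (ψs φs : EuclideanSpace ℝ (Fin D) → ℝ)
    (hinv : ∀ y, gradient ψs (gradient φs y) = y)
    (hQP : Q.map (gradient φs) = P)
    -- approximating pair of convex potentials
    (ψ : EuclideanSpace ℝ (Fin D) → ℝ) (hψ : Differentiable ℝ ψ)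
    (hψc : ConvexOn ℝ Set.univ ψ)
    (B : ℝ) (hB : 0 < B)
    (hBLip : ∀ x x', ‖gradient ψ x - gradient ψ x'‖ ≤ B * ‖x - x'‖)
    (φ : EuclideanSpace ℝ (Fin D) → ℝ)
    -- closedness in `L²` sense
    (εX εY : ℝ) (hεY : 0 ≤ εY)
    (hIX : Integrable (fun x => ‖gradient ψ x - gradient ψs x‖ ^ 2) P)
    (hX : (∫ x, ‖gradient ψ x - gradient ψs x‖ ^ 2 ∂P) ≤ εX)
    (hIY : Integrable (fun y => ‖gradient φ y - gradient φs y‖ ^ 2) Q)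
    (hY : (∫ y, ‖gradient φ y - gradient φs y‖ ^ 2 ∂Q) ≤ εY)
    (lam : ℝ) (hlam : 0 < lam)
    -- integrability of all the integrals involved
    (hI1 : Integrable ψ P)
    (hI2 : Integrable (fun y => ⟪gradient φ y, y⟫ - ψ (gradient φ y)) Q)
    (hI3 : Integrable (fun y => ‖gradient ψ (gradient φ y) - y‖ ^ 2) Q)
    (hI4 : Integrable (fun y => ⟪y, gradient φs y⟫) Q) :
    (∫ x, ψ x ∂P) + (∫ y, (⟪gradient φ y, y⟫ - ψ (gradient φ y)) ∂Q)
        + lam / 2 * (∫ y, ‖gradient ψ (gradient φ y) - y‖ ^ 2 ∂Q) ≤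
      (∫ y, ⟪y, gradient φs y⟫ ∂Q)
        + lam / 2 * (B * Real.sqrt εY + Real.sqrt εX) ^ 2
        + (B * Real.sqrt εY + Real.sqrt εX) * Real.sqrt εY
        + B / 2 * εY := by
  subst hQP
  have hφs : Measurable (gradient φs) := measurable_gradient φs
  have hψP : AEStronglyMeasurable ψ (Q.map (gradient φs)) := hψ.continuous.aestronglyMeasurable
  have hf : MemLp (fun y => ‖gradient φ y - gradient φs y‖) 2 Q :=
    (memLp_two_iff_integrable_sq ((measurable_gradient φ).sub hφs).norm.aestronglyMeasurable).2 hIY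
  have hg : MemLp (fun y => ‖gradient ψ (gradient φs y) - y‖) 2 Q :=
    memLp_norm_comp_sub_of_leftInverse hφs (measurable_gradient ψs) (measurable_gradient ψ) hinv hIX
  have hgX : ∫ y, ‖gradient ψ (gradient φs y) - y‖ ^ 2 ∂Q ≤ εX := by
    rwa [integral_sq_norm_comp_sub_eq_of_leftInverse hφs (measurable_gradient ψs)
      (measurable_gradient ψ) hinv]
  have hcorr := hψc.integral_add_integral_inner_sub_le hψ
    ((integrable_map_measure hψP hφs.aemeasurable).1 hI1) hI2 hI4 hg hf hgX hY
  have hreg : ∫ y, ‖gradient ψ (gradient φ y) - y‖ ^ 2 ∂Q ≤ (B * √εY + √εX) ^ 2 :=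
    integral_sq_le_of_le_mul_add hB.le (.of_forall fun _ => norm_nonneg _)
      (.of_forall fun _ => norm_nonneg _) hf hg hY hgX hI3 (.of_forall fun _ => norm_nonneg _)
      (.of_forall fun y =>
        (norm_sub_le_norm_sub_add_norm_sub _ (gradient ψ (gradient φs y)) _).trans
          (by gcongr; exact hBLip _ _))
  rw [integral_map hφs.aemeasurable hψP]
  have hεY' : √εY * √εY = εY := Real.mul_self_sqrt hεY
  nlinarith [mul_le_mul_of_nonneg_left hreg (by positivity : (0:ℝ) ≤ lam / 2),
    Real.sqrt_nonneg εX, Real.sqrt_nonneg εY]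

/-- Approximability of correlations: if `∇ψ` is `ε_X`-close to `∇ψ*` and `∇φ` is
`ε_Y`-close to `∇φ*` in the `L²` sense, then the regularized correlations are
within `(λ/2)(B√ε_Y + √ε_X)² + (B√ε_Y + √ε_X)√ε_Y + (B/2)ε_Y` of the true ones. -/
theorem regularized_corr_approximability {D : ℕ}
    (P Q : Measure (EuclideanSpace ℝ (Fin D)))
    [IsProbabilityMeasure P] [IsProbabilityMeasure Q]
    (hP2 : Integrable (fun x => ‖x‖ ^ 2) P)
    (hQ2 : Integrable (fun y => ‖y‖ ^ 2) Q)
    -- Brenier potentials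
    (ψs φs : EuclideanSpace ℝ (Fin D) → ℝ)
    (hψs : Differentiable ℝ ψs) (hψsc : ConvexOn ℝ Set.univ ψs)
    (hφs : Differentiable ℝ φs) (hφsc : ConvexOn ℝ Set.univ φs)
    (hinv : ∀ y, gradient ψs (gradient φs y) = y)
    (hQP : Q.map (gradient φs) = P)
    (hPQ : P.map (gradient ψs) = Q)
    -- approximating pair of convex potentials
    (ψ : EuclideanSpace ℝ (Fin D) → ℝ) (hψ : Differentiable ℝ ψ)
    (hψc : ConvexOn ℝ Set.univ ψ)
    (B : ℝ) (hB : 0 < B)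
    (hBLip : ∀ x x', ‖gradient ψ x - gradient ψ x'‖ ≤ B * ‖x - x'‖)
    (φ : EuclideanSpace ℝ (Fin D) → ℝ) (hφ : Differentiable ℝ φ)
    (hφc : ConvexOn ℝ Set.univ φ)
    -- closedness in `L²` sense
    (εX εY : ℝ) (hεX : 0 ≤ εX) (hεY : 0 ≤ εY)
    (hIX : Integrable (fun x => ‖gradient ψ x - gradient ψs x‖ ^ 2) P)
    (hX : (∫ x, ‖gradient ψ x - gradient ψs x‖ ^ 2 ∂P) ≤ εX)
    (hIY : Integrable (fun y => ‖gradient φ y - gradient φs y‖ ^ 2) Q)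
    (hY : (∫ y, ‖gradient φ y - gradient φs y‖ ^ 2 ∂Q) ≤ εY)
    (lam : ℝ) (hlam : 0 < lam)
    -- integrability of all the integrals involved
    (hI1 : Integrable ψ P)
    (hI2 : Integrable (fun y => ⟪gradient φ y, y⟫ - ψ (gradient φ y)) Q)
    (hI3 : Integrable (fun y => ‖gradient ψ (gradient φ y) - y‖ ^ 2) Q)
    (hI4 : Integrable (fun y => ⟪y, gradient φs y⟫) Q) :
    (∫ x, ψ x ∂P) + (∫ y, (⟪gradient φ y, y⟫ - ψ (gradient φ y)) ∂Q)
        + lam / 2 * (∫ y, ‖gradient ψ (gradient φ y) - y‖ ^ 2 ∂Q) ≤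
      (∫ y, ⟪y, gradient φs y⟫ ∂Q)
        + lam / 2 * (B * Real.sqrt εY + Real.sqrt εX) ^ 2
        + (B * Real.sqrt εY + Real.sqrt εX) * Real.sqrt εY
        + B / 2 * εY :=
  regularized_corr_approximability_general P Q ψs φs hinv hQP ψ hψ hψc B hB hBLip φ εX εY hεY hIX hX
    hIY hY lam hlam hI1 hI2 hI3 hI4
end

section
/- (Decoding theorem.) Let S be a probability measure on ℝ^K with finite second moment, u : ℝ^K → ℝ^D a measurable encoder, and v : ℝ^D → ℝ^K a decoder that is Lipschitz with constant L ≥ 0. Let P be a probability measure on ℝ^D and g : ℝ^D → ℝ^D a measurable map such that W₂²(g_*P, u_*S) ≤ ε for some ε ≥ 0. Assume g_*P, u_*S and (v∘g)_*P have finite second moments and ∫ ‖s − v(u(s))‖² dS(s) < ∞. Then √(W₂²((v∘g)_*P, S)) ≤ L·√ε + √((1/2) ∫ ‖s − v(u(s))‖² dS(s)). -/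
open MeasureTheory ENNReal
open scoped RealInnerProductSpace

/-- Squared Wasserstein-2 distance: infimum over couplings of `∫ ‖x - y‖² / 2`. -/
noncomputable def W2sq {E : Type*} [NormedAddCommGroup E] [MeasurableSpace E]
    (μ ν : Measure E) : ℝ≥0∞ :=
  ⨅ (π : Measure (E × E)) (_ : IsProbabilityMeasure π)
    (_ : π.map Prod.fst = μ) (_ : π.map Prod.snd = ν),
    ∫⁻ p, ENNReal.ofReal (‖p.1 - p.2‖ ^ 2 / 2) ∂π

/-!
Glue a coupling `π` of `g_*P` and `u_*S` with the deterministic coupling `(u, id)_*S` of `u_*S`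
and `S` along their common marginal `u_*S`, and push the glued measure forward by
`(x, y, s) ↦ (v x, s)`. This is a coupling of `(v ∘ g)_*P` and `S`, and Minkowski's inequality in
`L²` together with `‖v x - v y‖ ≤ L ‖x - y‖` bounds the square root of its cost by
`L √cost(π) + √(½ ∫ ‖s - v (u s)‖²)`. Since the bound is monotone and continuous in `cost(π)`,
taking the infimum over `π` gives the claim.
-/

open ProbabilityTheory
open scoped NNReal

lemma rpow_half_lintegral_sq_norm_div_two {Ω E : Type*} [MeasurableSpace Ω]
    [NormedAddCommGroup E] (μ : Measure Ω) (f : Ω → E) :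
    (∫⁻ x, ENNReal.ofReal (‖f x‖ ^ 2 / 2) ∂μ) ^ (1 / 2 : ℝ) = eLpNorm f 2 μ / 2 ^ (1 / 2 : ℝ) := by
  have hpt : ∀ x, ENNReal.ofReal (‖f x‖ ^ 2 / 2) = 2⁻¹ * ‖f x‖ₑ ^ 2 := fun x => by
    rw [ENNReal.ofReal_div_of_pos two_pos, ENNReal.ofReal_pow (norm_nonneg _), ofReal_norm,
      ENNReal.ofReal_ofNat, ENNReal.div_eq_inv_mul]
  have hL2 : eLpNorm f 2 μ ^ 2 = ∫⁻ x, ‖f x‖ₑ ^ 2 ∂μ := by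
    have h := eLpNorm_nnreal_pow_eq_lintegral (f := f) (μ := μ) (p := 2) two_ne_zero
    simp only [NNReal.coe_ofNat, ENNReal.rpow_two, ENNReal.coe_ofNat] at h
    exact h
  simp only [hpt, lintegral_const_mul' _ _ (ENNReal.inv_ne_top.2 two_ne_zero), ← hL2]
  rw [ENNReal.mul_rpow_of_nonneg _ _ (by norm_num), ENNReal.inv_rpow, ← ENNReal.rpow_natCast,
    ← ENNReal.rpow_mul, ENNReal.div_eq_inv_mul]
  norm_num

section W2sq

variable {E : Type*} [NormedAddCommGroup E] [MeasurableSpace E] {μ ν : Measure E}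

lemma W2sq_le_lintegral (π : Measure (E × E)) [IsProbabilityMeasure π] (h1 : π.map Prod.fst = μ)
    (h2 : π.map Prod.snd = ν) :
    W2sq μ ν ≤ ∫⁻ p, ENNReal.ofReal (‖p.1 - p.2‖ ^ 2 / 2) ∂π :=
  iInf₂_le_of_le π ‹_› (iInf₂_le_of_le h1 h2 le_rfl)

lemma le_apply_W2sq_of_forall_coupling {F : ℝ≥0∞ → ℝ≥0∞} (hF : Monotone F) (hFc : Continuous F)
    (hW : W2sq μ ν ≠ ∞) {a : ℝ≥0∞}
    (h : ∀ π : Measure (E × E), IsProbabilityMeasure π → π.map Prod.fst = μ →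
      π.map Prod.snd = ν → a ≤ F (∫⁻ p, ENNReal.ofReal (‖p.1 - p.2‖ ^ 2 / 2) ∂π)) :
    a ≤ F (W2sq μ ν) := by
  -- If `F (W2sq μ ν) < a`, continuity gives `c > W2sq μ ν` with `F c < a`, and some coupling
  -- costs less than `c`.
  by_contra! hlt
  obtain ⟨b, hWb, hb⟩ := exists_Ico_subset_of_mem_nhds
    (hFc.continuousAt.preimage_mem_nhds (gt_mem_nhds hlt)) ⟨∞, hW.lt_top⟩
  obtain ⟨c, hWc, hcb⟩ := exists_between hWb
  obtain ⟨π, hπ, h1, h2, hcost⟩ : ∃ π : Measure (E × E), IsProbabilityMeasure π ∧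
      π.map Prod.fst = μ ∧ π.map Prod.snd = ν ∧
      ∫⁻ p, ENNReal.ofReal (‖p.1 - p.2‖ ^ 2 / 2) ∂π < c := by
    simpa only [W2sq, iInf_lt_iff, exists_prop] using hWc
  exact ((h π hπ h1 h2).trans (hF hcost.le)).not_gt (hb ⟨hWc.le, hcb⟩)

end W2sq

lemma exists_gluing {α β γ : Type*} [MeasurableSpace α] [MeasurableSpace β] [MeasurableSpace γ]
    [StandardBorelSpace γ] [Nonempty γ] (π : Measure (α × β)) [IsProbabilityMeasure π]
    (τ : Measure (β × γ)) [IsFiniteMeasure τ] (h : π.snd = τ.fst) :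
    ∃ m : Measure ((α × β) × γ), IsProbabilityMeasure m ∧ m.fst = π ∧
      m.map (fun q => (q.1.2, q.2)) = τ := by
  refine ⟨π ⊗ₘ τ.condKernel.comap Prod.snd measurable_snd, inferInstance,
    Measure.fst_compProd _ _, ?_⟩
  have hmeas : Measurable fun q : (α × β) × γ => (q.1.2, q.2) :=
    (measurable_snd.comp measurable_fst).prodMk measurable_snd
  conv_rhs => rw [← τ.disintegrate τ.condKernel, ← h]
  ext s hs
  rw [Measure.map_apply hmeas hs, Measure.compProd_apply (hmeas hs), Measure.compProd_apply hs,
    Measure.snd, lintegral_map (Kernel.measurable_kernel_prodMk_left hs) measurable_snd]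
  rfl

section Gluing

variable {E F : Type*} [NormedAddCommGroup E] [MeasurableSpace E] [BorelSpace E]
  [SecondCountableTopology E] [NormedAddCommGroup F] [MeasurableSpace F] [BorelSpace F]
  [SecondCountableTopology F] [CompleteSpace F]

lemma exists_coupling_map_eLpNorm_le (μ : Measure E) (σ : Measure F) [IsProbabilityMeasure σ]
    {u : F → E} (hu : Measurable u) {v : E → F} {L : ℝ≥0} (hv : LipschitzWith L v)
    (π : Measure (E × E)) [IsProbabilityMeasure π] (hπ₁ : π.map Prod.fst = μ)
    (hπ₂ : π.map Prod.snd = σ.map u) :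
    ∃ π' : Measure (F × F), IsProbabilityMeasure π' ∧ π'.map Prod.fst = μ.map v ∧
      π'.map Prod.snd = σ ∧
      eLpNorm (fun p => p.1 - p.2) 2 π' ≤
        L * eLpNorm (fun p => p.1 - p.2) 2 π + eLpNorm (fun s => s - v (u s)) 2 σ := by
  have hvm : Measurable v := hv.continuous.measurable
  have hτ : Measurable fun s => (u s, s) := hu.prodMk measurable_id
  obtain ⟨m, hm, hm₁, hm₂⟩ := exists_gluing π (σ.map fun s => (u s, s))
    (by rw [Measure.fst_map_prodMk measurable_id', ← hπ₂]; rfl)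
  have hw : Measurable fun q : (E × E) × F => (v q.1.1, q.2) :=
    (hvm.comp (measurable_fst.comp measurable_fst)).prodMk measurable_snd
  have hw' : Measurable fun q : (E × E) × F => (q.1.2, q.2) :=
    (measurable_snd.comp measurable_fst).prodMk measurable_snd
  refine ⟨m.map fun q => (v q.1.1, q.2), Measure.isProbabilityMeasure_map hw.aemeasurable,
    ?_, ?_, ?_⟩
  · rw [Measure.map_map measurable_fst hw, ← hπ₁, ← hm₁, Measure.fst,
      Measure.map_map measurable_fst measurable_fst, Measure.map_map hvm
        (measurable_fst.comp measurable_fst)]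
    rfl
  · rw [Measure.map_map measurable_snd hw]
    change m.map (Prod.snd ∘ fun q => (q.1.2, q.2)) = σ
    rw [← Measure.map_map measurable_snd hw', hm₂, Measure.map_map measurable_snd hτ]
    exact Measure.map_id
  calc eLpNorm (fun p => p.1 - p.2) 2 (m.map fun q => (v q.1.1, q.2))
      = eLpNorm (fun q => v q.1.1 - q.2) 2 m :=
        eLpNorm_map_measure (by fun_prop) hw.aemeasurable
    _ ≤ eLpNorm (fun q => v q.1.1 - v q.1.2) 2 m + eLpNorm (fun q => v q.1.2 - q.2) 2 m := by
        convert eLpNorm_add_le (p := 2) (μ := m) (f := fun q => v q.1.1 - v q.1.2)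
          (g := fun q => v q.1.2 - q.2) (by fun_prop) (by fun_prop) one_le_two using 2
        ext q
        simp only [Pi.add_apply, sub_add_sub_cancel]
    _ ≤ L * eLpNorm (fun q => q.1.1 - q.1.2) 2 m + eLpNorm (fun q => v q.1.2 - q.2) 2 m := by
        gcongr
        exact eLpNorm_le_nnreal_smul_eLpNorm_of_ae_le_mul'
          (ae_of_all _ fun q => by simpa only [edist_eq_enorm_sub] using hv.edist_le_mul _ _) 2
    _ = L * eLpNorm (fun p => p.1 - p.2) 2 π + eLpNorm (fun s => s - v (u s)) 2 σ := by
        have hπ : eLpNorm (fun q => q.1.1 - q.1.2) 2 m = eLpNorm (fun p => p.1 - p.2) 2 π := by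
          rw [← hm₁, Measure.fst, eLpNorm_map_measure (by fun_prop) measurable_fst.aemeasurable]
          rfl
        have hσ : eLpNorm (fun q => v q.1.2 - q.2) 2 m = eLpNorm (fun s => s - v (u s)) 2 σ := by
          calc _ = eLpNorm (fun y => v y.1 - y.2) 2 (m.map fun q => (q.1.2, q.2)) :=
                (eLpNorm_map_measure (by fun_prop) hw'.aemeasurable).symm
            _ = eLpNorm (fun s => v (u s) - s) 2 σ := by
                rw [hm₂, eLpNorm_map_measure (by fun_prop) hτ.aemeasurable]; rfl
            _ = _ := eLpNorm_sub_comm _ _ _ _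
        rw [hπ, hσ]

lemma exists_coupling_map_lintegral_le (μ : Measure E) (σ : Measure F) [IsProbabilityMeasure σ]
    {u : F → E} (hu : Measurable u) {v : E → F} {L : ℝ≥0} (hv : LipschitzWith L v)
    (π : Measure (E × E)) [IsProbabilityMeasure π] (hπ₁ : π.map Prod.fst = μ)
    (hπ₂ : π.map Prod.snd = σ.map u) :
    ∃ π' : Measure (F × F), IsProbabilityMeasure π' ∧ π'.map Prod.fst = μ.map v ∧
      π'.map Prod.snd = σ ∧
      ∫⁻ p, ENNReal.ofReal (‖p.1 - p.2‖ ^ 2 / 2) ∂π' ≤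
        (L * (∫⁻ p, ENNReal.ofReal (‖p.1 - p.2‖ ^ 2 / 2) ∂π) ^ (1 / 2 : ℝ) +
          (∫⁻ s, ENNReal.ofReal (‖s - v (u s)‖ ^ 2 / 2) ∂σ) ^ (1 / 2 : ℝ)) ^ 2 := by
  obtain ⟨π', hπ', hπ'₁, hπ'₂, hle⟩ := exists_coupling_map_eLpNorm_le μ σ hu hv π hπ₁ hπ₂
  refine ⟨π', hπ', hπ'₁, hπ'₂, ?_⟩
  rw [← ENNReal.rpow_two, ← ENNReal.rpow_inv_le_iff two_pos, ← one_div,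
    rpow_half_lintegral_sq_norm_div_two, rpow_half_lintegral_sq_norm_div_two,
    rpow_half_lintegral_sq_norm_div_two, ← mul_div_assoc, ← ENNReal.add_div]
  exact ENNReal.div_le_div_right hle _

end Gluing

theorem decoding_theorem_general {K D : ℕ}
    (S : Measure (EuclideanSpace ℝ (Fin K))) [IsProbabilityMeasure S]
    (u : EuclideanSpace ℝ (Fin K) → EuclideanSpace ℝ (Fin D)) (hu : Measurable u)
    (v : EuclideanSpace ℝ (Fin D) → EuclideanSpace ℝ (Fin K))
    (L : ℝ) (hL : 0 ≤ L)
    (hv : ∀ a b, dist (v a) (v b) ≤ L * dist a b)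
    (P : Measure (EuclideanSpace ℝ (Fin D))) [IsProbabilityMeasure P]
    (g : EuclideanSpace ℝ (Fin D) → EuclideanSpace ℝ (Fin D)) (hg : Measurable g)
    (ε : ℝ) (hε : 0 ≤ ε)
    (hW : W2sq (P.map g) (S.map u) ≤ ENNReal.ofReal ε)
    (hrec : Integrable (fun s => ‖s - v (u s)‖ ^ 2) S) :
    W2sq (P.map (v ∘ g)) S ≤
      ENNReal.ofReal ((L * Real.sqrt ε
        + Real.sqrt (1 / 2 * ∫ s, ‖s - v (u s)‖ ^ 2 ∂S)) ^ 2) := by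
  have hv' : LipschitzWith L.toNNReal v :=
    LipschitzWith.of_dist_le_mul fun a b => by rw [Real.coe_toNNReal _ hL]; exact hv a b
  have hrec' : ∫⁻ s, ENNReal.ofReal (‖s - v (u s)‖ ^ 2 / 2) ∂S =
      ENNReal.ofReal (1 / 2 * ∫ s, ‖s - v (u s)‖ ^ 2 ∂S) := by
    rw [← ofReal_integral_eq_lintegral_ofReal (hrec.div_const 2)
      (ae_of_all _ fun _ => by positivity), integral_div, one_div_mul_eq_div]
  set F : ℝ≥0∞ → ℝ≥0∞ := fun c => (ENNReal.ofReal L * c ^ (1 / 2 : ℝ) +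
    (∫⁻ s, ENNReal.ofReal (‖s - v (u s)‖ ^ 2 / 2) ∂S) ^ (1 / 2 : ℝ)) ^ 2 with hF
  have hFm : Monotone F := fun a b hab => by simp only [hF]; gcongr
  have hFc : Continuous F := by
    simp only [hF]
    fun_prop (disch := exact ofReal_ne_top)
  have : IsProbabilityMeasure (P.map g) := Measure.isProbabilityMeasure_map hg.aemeasurable
  calc W2sq (P.map (v ∘ g)) S ≤ F (W2sq (P.map g) (S.map u)) := by
        refine le_apply_W2sq_of_forall_coupling hFm hFc (ne_top_of_le_ne_top ofReal_ne_top hW)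
          fun π _ h₁ h₂ => ?_
        obtain ⟨π', _, h₁', h₂', hcost⟩ :=
          exists_coupling_map_lintegral_le (P.map g) S hu hv' π h₁ h₂
        rw [Measure.map_map hv'.continuous.measurable hg] at h₁'
        exact (W2sq_le_lintegral π' h₁' h₂').trans hcost
    _ ≤ F (ENNReal.ofReal ε) := hFm hW
    _ = _ := by
        have hsqrt : ∀ {x : ℝ}, 0 ≤ x → ENNReal.ofReal x ^ (1 / 2 : ℝ) = ENNReal.ofReal √x :=
          fun hx => by rw [ENNReal.ofReal_rpow_of_nonneg hx one_half_pos.le, Real.sqrt_eq_rpow]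
        have hI : 0 ≤ 1 / 2 * ∫ s, ‖s - v (u s)‖ ^ 2 ∂S := by positivity
        simp only [hF, hrec']
        rw [hsqrt hε, hsqrt hI, ← ENNReal.ofReal_mul hL,
          ← ENNReal.ofReal_add (by positivity) (by positivity),
          ← ENNReal.ofReal_pow (by positivity)]

/-- Decoding theorem: `√W₂²((v∘g)_*P, S) ≤ L√ε + √((1/2)·reconstruction loss)`,
stated in the equivalent squared form. -/
theorem decoding_theorem {K D : ℕ}
    (S : Measure (EuclideanSpace ℝ (Fin K))) [IsProbabilityMeasure S]
    (hS2 : Integrable (fun s => ‖s‖ ^ 2) S)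
    (u : EuclideanSpace ℝ (Fin K) → EuclideanSpace ℝ (Fin D)) (hu : Measurable u)
    (v : EuclideanSpace ℝ (Fin D) → EuclideanSpace ℝ (Fin K))
    (L : ℝ) (hL : 0 ≤ L)
    (hv : ∀ a b, dist (v a) (v b) ≤ L * dist a b)
    (P : Measure (EuclideanSpace ℝ (Fin D))) [IsProbabilityMeasure P]
    (g : EuclideanSpace ℝ (Fin D) → EuclideanSpace ℝ (Fin D)) (hg : Measurable g)
    (ε : ℝ) (hε : 0 ≤ ε)
    (hW : W2sq (P.map g) (S.map u) ≤ ENNReal.ofReal ε)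
    (h1 : Integrable (fun x => ‖x‖ ^ 2) (P.map g))
    (h2 : Integrable (fun x => ‖x‖ ^ 2) (S.map u))
    (h3 : Integrable (fun s => ‖s‖ ^ 2) (P.map (v ∘ g)))
    (hrec : Integrable (fun s => ‖s - v (u s)‖ ^ 2) S) :
    W2sq (P.map (v ∘ g)) S ≤
      ENNReal.ofReal ((L * Real.sqrt ε
        + Real.sqrt (1 / 2 * ∫ s, ‖s - v (u s)‖ ^ 2 ∂S)) ^ 2) :=
  decoding_theorem_general S u hu v L hL hv P g hg ε hε hW hrec
end

section
/- Let ψ : ℝ^D → ℝ be a differentiable convex function whose gradient is Lipschitz with constant B > 0, and let φ : ℝ^D → ℝ be a differentiable convex function with ∇ψ(∇φ(y)) = y for all y. Let ψ*, φ* : ℝ^D → ℝ be differentiable convex functions with ∇ψ*(∇φ*(y)) = y for all y and such that the pushforward of Q under ∇φ* equals P, where P and Q are probability measures on ℝ^D with finite second moments. Assume ∫ ‖∇ψ(x)‖² dP(x) < ∞. Then ∫ ‖∇φ(y) − ∇φ*(y)‖² dQ(y) ≥ (1/B²) ∫ ‖∇ψ*(x) − ∇ψ(x)‖² dP(x) ≥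 (2/B²) · W₂²((∇ψ)_*P, (∇ψ*)_*P). -/
open MeasureTheory ENNReal
open scoped RealInnerProductSpace

lemma measurable_gradient' {D : ℕ} (f : EuclideanSpace ℝ (Fin D) → ℝ) :
    Measurable (gradient f) := by
  have : gradient f = fun x =>
      (InnerProductSpace.toDual ℝ (EuclideanSpace ℝ (Fin D))).symm (fderiv ℝ f x) := rfl
  rw [this]
  exact (InnerProductSpace.toDual ℝ (EuclideanSpace ℝ (Fin D))).symm.continuous.measurable.comp
    (measurable_fderiv ℝ f)

/-- `∫ ‖∇φ - ∇φ*‖² dQ ≥ (1/B²) ∫ ‖∇ψ* - ∇ψ‖² dP ≥ (2/B²) W₂²((∇ψ)_*P, (∇ψ*)_*P)`. -/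
theorem grad_closeness_chain {D : ℕ}
    (P Q : Measure (EuclideanSpace ℝ (Fin D)))
    [IsProbabilityMeasure P] [IsProbabilityMeasure Q]
    (hP2 : Integrable (fun x => ‖x‖ ^ 2) P)
    (hQ2 : Integrable (fun y => ‖y‖ ^ 2) Q)
    (ψs φs : EuclideanSpace ℝ (Fin D) → ℝ)
    (hψs : Differentiable ℝ ψs) (hψsc : ConvexOn ℝ Set.univ ψs)
    (hφs : Differentiable ℝ φs) (hφsc : ConvexOn ℝ Set.univ φs)
    (hinv : ∀ y, gradient ψs (gradient φs y) = y)
    (hQP : Q.map (gradient φs) = P)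
    (ψ : EuclideanSpace ℝ (Fin D) → ℝ)
    (hψ : Differentiable ℝ ψ) (hψc : ConvexOn ℝ Set.univ ψ)
    (B : ℝ) (hB : 0 < B)
    (hBLip : ∀ x x', ‖gradient ψ x - gradient ψ x'‖ ≤ B * ‖x - x'‖)
    (φ : EuclideanSpace ℝ (Fin D) → ℝ)
    (hφ : Differentiable ℝ φ) (hφc : ConvexOn ℝ Set.univ φ)
    (hinv' : ∀ y, gradient ψ (gradient φ y) = y)
    (hψ2 : Integrable (fun x => ‖gradient ψ x‖ ^ 2) P) :
    ENNReal.ofReal (1 / B ^ 2) *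
        (∫⁻ x, ENNReal.ofReal (‖gradient ψs x - gradient ψ x‖ ^ 2) ∂P) ≤
      (∫⁻ y, ENNReal.ofReal (‖gradient φ y - gradient φs y‖ ^ 2) ∂Q) ∧
    ENNReal.ofReal (2 / B ^ 2) *
        W2sq (P.map (gradient ψ)) (P.map (gradient ψs)) ≤
      ENNReal.ofReal (1 / B ^ 2) *
        ∫⁻ x, ENNReal.ofReal (‖gradient ψs x - gradient ψ x‖ ^ 2) ∂P := by
  have mψ := measurable_gradient' ψ
  have mψs := measurable_gradient' ψs
  have mφs := measurable_gradient' φs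
  have hB2 : (0:ℝ) < B ^ 2 := by positivity
  constructor
  · -- first inequality
    have key : (∫⁻ x, ENNReal.ofReal (‖gradient ψs x - gradient ψ x‖ ^ 2) ∂P)
        ≤ ENNReal.ofReal (B ^ 2) *
          ∫⁻ y, ENNReal.ofReal (‖gradient φ y - gradient φs y‖ ^ 2) ∂Q := by
      have mi1 : Measurable fun x => ENNReal.ofReal (‖gradient ψs x - gradient ψ x‖ ^ 2) :=
        ((mψs.sub mψ).norm.pow_const 2).ennreal_ofReal
      have mi2 : Measurable fun y => ENNReal.ofReal (‖gradient φ y - gradient φs y‖ ^ 2) :=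
        (((measurable_gradient' φ).sub mφs).norm.pow_const 2).ennreal_ofReal
      rw [← hQP, lintegral_map mi1 mφs, ← lintegral_const_mul _ mi2]
      refine lintegral_mono fun y => ?_
      rw [← ENNReal.ofReal_mul (le_of_lt hB2)]
      apply ENNReal.ofReal_le_ofReal
      have h1 : gradient ψs (gradient φs y) = y := hinv y
      have h2 : ‖gradient ψs (gradient φs y) - gradient ψ (gradient φs y)‖
          ≤ B * ‖gradient φ y - gradient φs y‖ := by
        rw [h1]
        calc ‖y - gradient ψ (gradient φs y)‖
            = ‖gradient ψ (gradient φ y) - gradient ψ (gradient φs y)‖ := by rw [hinv' y]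
          _ ≤ B * ‖gradient φ y - gradient φs y‖ := hBLip _ _
      calc ‖gradient ψs (gradient φs y) - gradient ψ (gradient φs y)‖ ^ 2
          ≤ (B * ‖gradient φ y - gradient φs y‖) ^ 2 := by
            apply sq_le_sq' _ h2
            have := norm_nonneg (gradient ψs (gradient φs y) - gradient ψ (gradient φs y))
            nlinarith [norm_nonneg (gradient φ y - gradient φs y)]
        _ = B ^ 2 * ‖gradient φ y - gradient φs y‖ ^ 2 := by ring
    calc ENNReal.ofReal (1 / B ^ 2) *
        (∫⁻ x, ENNReal.ofReal (‖gradient ψs x - gradient ψ x‖ ^ 2) ∂P)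
        ≤ ENNReal.ofReal (1 / B ^ 2) * (ENNReal.ofReal (B ^ 2) *
          ∫⁻ y, ENNReal.ofReal (‖gradient φ y - gradient φs y‖ ^ 2) ∂Q) :=
          mul_le_mul_right key _
      _ = (ENNReal.ofReal (1 / B ^ 2) * ENNReal.ofReal (B ^ 2)) *
          ∫⁻ y, ENNReal.ofReal (‖gradient φ y - gradient φs y‖ ^ 2) ∂Q := by ring
      _ = ∫⁻ y, ENNReal.ofReal (‖gradient φ y - gradient φs y‖ ^ 2) ∂Q := by
          rw [← ENNReal.ofReal_mul (by positivity)]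
          rw [one_div, inv_mul_cancel₀ (ne_of_gt hB2), ENNReal.ofReal_one, one_mul]
  · -- second inequality
    set π : Measure (EuclideanSpace ℝ (Fin D) × EuclideanSpace ℝ (Fin D)) :=
      P.map (fun x => (gradient ψ x, gradient ψs x)) with hπ
    have mpair : Measurable (fun x => (gradient ψ x, gradient ψs x)) := mψ.prodMk mψs
    have hπprob : IsProbabilityMeasure π := Measure.isProbabilityMeasure_map mpair.aemeasurable
    have hfst : π.map Prod.fst = P.map (gradient ψ) := by
      rw [hπ, Measure.map_map measurable_fst mpair]; rfl
    have hsnd : π.map Prod.snd = P.map (gradient ψs) := by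
      rw [hπ, Measure.map_map measurable_snd mpair]; rfl
    have hW : W2sq (P.map (gradient ψ)) (P.map (gradient ψs))
        ≤ ∫⁻ p, ENNReal.ofReal (‖p.1 - p.2‖ ^ 2 / 2) ∂π := by
      refine iInf_le_of_le π ?_
      exact iInf_le_of_le hπprob (iInf_le_of_le hfst (iInf_le_of_le hsnd le_rfl))
    have hint : (∫⁻ p, ENNReal.ofReal (‖p.1 - p.2‖ ^ 2 / 2) ∂π)
        = ENNReal.ofReal (1 / 2) *
          ∫⁻ x, ENNReal.ofReal (‖gradient ψs x - gradient ψ x‖ ^ 2) ∂P := by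
      have mi3 : Measurable fun p : EuclideanSpace ℝ (Fin D) × EuclideanSpace ℝ (Fin D) =>
          ENNReal.ofReal (‖p.1 - p.2‖ ^ 2 / 2) :=
        ((((measurable_fst.sub measurable_snd).norm.pow_const 2).div_const 2)).ennreal_ofReal
      have mi1 : Measurable fun x => ENNReal.ofReal (‖gradient ψs x - gradient ψ x‖ ^ 2) :=
        ((mψs.sub mψ).norm.pow_const 2).ennreal_ofReal
      rw [hπ, lintegral_map mi3 mpair, ← lintegral_const_mul _ mi1]
      congr 1; ext x
      rw [← ENNReal.ofReal_mul (by norm_num), norm_sub_rev]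
      congr 1; ring
    calc ENNReal.ofReal (2 / B ^ 2) * W2sq (P.map (gradient ψ)) (P.map (gradient ψs))
        ≤ ENNReal.ofReal (2 / B ^ 2) * (ENNReal.ofReal (1 / 2) *
          ∫⁻ x, ENNReal.ofReal (‖gradient ψs x - gradient ψ x‖ ^ 2) ∂P) := by
          rw [← hint]; exact mul_le_mul_right hW _
      _ = (ENNReal.ofReal (2 / B ^ 2) * ENNReal.ofReal (1 / 2)) *
          ∫⁻ x, ENNReal.ofReal (‖gradient ψs x - gradient ψ x‖ ^ 2) ∂P := by ring
      _ = ENNReal.ofReal (1 / B ^ 2) *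
          ∫⁻ x, ENNReal.ofReal (‖gradient ψs x - gradient ψ x‖ ^ 2) ∂P := by
          rw [← ENNReal.ofReal_mul (by positivity)]
          congr 1; field_simp
end
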